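/- arXiv:1910.05067 — 4 statements merged into one kernel-verified Lean document; each statement's English description precedes it below -/
import Mathlib

section
/- Positivity of the hybrid upwind finite-volume scheme under CFL conditions: let n ≥ 1 with periodic cell indices j ∈ ℤ/nℤ, let Δt, Δx, β > 0 and set λ₁ = Δt/Δx and λ₂ = √(Δt/Δx). Suppose given strictly positive reconstructed east/west cell values ρᴱⱼ > 0, ρᵂⱼ > 0, interface velocities uⱼ ∈ ℝ and interface noise samples ξⱼ ∈ ℝ (uⱼ and ξⱼ being the values at interface j+1/2). Define the forward-Euler updated cell averages ρ'ⱼ = (ρᴱⱼ + ρᵂⱼ)/2 − λ₁(u⁺ⱼ ρᴱⱼ + u⁻ⱼ ρᵂⱼ₊₁ − u⁺ⱼ₋₁ ρᴱⱼ₋₁ − u⁻ⱼ₋₁ ρᵂⱼ) − λ₂(ξ⁺ⱼ √(ρᴱⱼ/β) + ξ⁻ⱼ √(ρᵂⱼ₊₁/β) − ξ⁺ⱼ₋₁ √(ρᴱⱼ₋₁/β) − ξ⁻ⱼ₋₁ √(ρᵂⱼ/β)). If for every j the two CFL conditions 1/2 − λ₁ u⁺ⱼ − λ₂ ξ⁺ⱼ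 / √(ρᴱⱼ β) ≥ 0 and 1/2 − λ₁ max(−uⱼ₋₁, 0) − λ₂ max(−ξⱼ₋₁, 0) / √(ρᵂⱼ β) ≥ 0 hold, then ρ'ⱼ ≥ 0 for all j. -/
/-!
Grouping the terms of the update by the reconstructed values they multiply, the new cell average is
`ρᴱⱼ · (CFL₁)ⱼ + ρᵂⱼ · (CFL₂)ⱼ` plus the inflow through both interfaces, which the upwinding makes
nonnegative. The noise terms fit this grouping because `√(ρ/β) = ρ / √(ρβ)`.
-/

theorem min_zero_eq_neg_max_neg_zero {α : Type*} [AddCommGroup α] [LinearOrder α]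
    [IsOrderedAddMonoid α] (a : α) : min a 0 = -max (-a) 0 := by
  rw [← neg_neg (min a 0), ← max_neg_neg, neg_zero]

theorem Real.sqrt_div_eq_div_sqrt_mul {x : ℝ} (hx : 0 ≤ x) (β : ℝ) :
    √(x / β) = x / √(x * β) := by
  rw [Real.sqrt_mul hx, ← div_div, Real.div_sqrt, Real.sqrt_div hx]

/-- One cell of the scheme: `ρE, ρW` are the values in the cell, `ρEl` the east value of its left
neighbour, `ρWr` the west value of its right neighbour, and `uL, ξL` / `uR, ξR` the data at its
left / right interface. -/
theorem upwind_cell_update_nonneg {lam1 lam2 β ρE ρW ρEl ρWr uL uR ξL ξR : ℝ}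
    (hlam1 : 0 ≤ lam1) (hlam2 : 0 ≤ lam2) (hρE : 0 ≤ ρE) (hρW : 0 ≤ ρW) (hρEl : 0 ≤ ρEl)
    (hρWr : 0 ≤ ρWr)
    (hCFL1 : 0 ≤ 1 / 2 - lam1 * max uR 0 - lam2 * max ξR 0 / √(ρE * β))
    (hCFL2 : 0 ≤ 1 / 2 - lam1 * max (-uL) 0 - lam2 * max (-ξL) 0 / √(ρW * β)) :
    0 ≤ (ρE + ρW) / 2
      - lam1 * (max uR 0 * ρE + min uR 0 * ρWr - max uL 0 * ρEl - min uL 0 * ρW)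
      - lam2 * (max ξR 0 * √(ρE / β) + min ξR 0 * √(ρWr / β)
              - max ξL 0 * √(ρEl / β) - min ξL 0 * √(ρW / β)) := by
  have regroup : (ρE + ρW) / 2
      - lam1 * (max uR 0 * ρE + min uR 0 * ρWr - max uL 0 * ρEl - min uL 0 * ρW)
      - lam2 * (max ξR 0 * √(ρE / β) + min ξR 0 * √(ρWr / β)
              - max ξL 0 * √(ρEl / β) - min ξL 0 * √(ρW / β))
      = ρE * (1 / 2 - lam1 * max uR 0 - lam2 * max ξR 0 / √(ρE * β))
        + ρW * (1 / 2 - lam1 * max (-uL) 0 - lam2 * max (-ξL) 0 / √(ρW * β))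
        + lam1 * (max uL 0 * ρEl + max (-uR) 0 * ρWr)
        + lam2 * (max ξL 0 * √(ρEl / β) + max (-ξR) 0 * √(ρWr / β)) := by
    simp only [Real.sqrt_div_eq_div_sqrt_mul hρE, Real.sqrt_div_eq_div_sqrt_mul hρW,
      min_zero_eq_neg_max_neg_zero]
    ring
  rw [regroup]
  have hinflow1 : 0 ≤ lam1 * (max uL 0 * ρEl + max (-uR) 0 * ρWr) := by positivity
  have hinflow2 : 0 ≤ lam2 * (max ξL 0 * √(ρEl / β) + max (-ξR) 0 * √(ρWr / β)) := by
    positivity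
  have hcellE := mul_nonneg hρE hCFL1
  have hcellW := mul_nonneg hρW hCFL2
  linarith

theorem positivity_upwind_scheme_CFL_general
    (n : ℕ)
    (Δt Δx β : ℝ) (hΔt : 0 < Δt) (hΔx : 0 < Δx)
    (lam1 lam2 : ℝ) (hlam1 : lam1 = Δt / Δx) (hlam2 : lam2 = Real.sqrt (Δt / Δx))
    (ρE ρW u ξ : ZMod n → ℝ)
    (hρE : ∀ j, 0 < ρE j) (hρW : ∀ j, 0 < ρW j)
    (ρ' : ZMod n → ℝ)
    (hρ' : ∀ j, ρ' j =
      (ρE j + ρW j) / 2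
      - lam1 * (max (u j) 0 * ρE j + min (u j) 0 * ρW (j + 1)
              - max (u (j - 1)) 0 * ρE (j - 1) - min (u (j - 1)) 0 * ρW j)
      - lam2 * (max (ξ j) 0 * Real.sqrt (ρE j / β)
              + min (ξ j) 0 * Real.sqrt (ρW (j + 1) / β)
              - max (ξ (j - 1)) 0 * Real.sqrt (ρE (j - 1) / β)
              - min (ξ (j - 1)) 0 * Real.sqrt (ρW j / β)))
    (hCFL1 : ∀ j, 0 ≤ 1 / 2 - lam1 * max (u j) 0
        - lam2 * max (ξ j) 0 / Real.sqrt (ρE j * β))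
    (hCFL2 : ∀ j, 0 ≤ 1 / 2 - lam1 * max (-u (j - 1)) 0
        - lam2 * max (-ξ (j - 1)) 0 / Real.sqrt (ρW j * β)) :
    ∀ j, 0 ≤ ρ' j := by
  intro j
  rw [hρ' j]
  exact upwind_cell_update_nonneg (by rw [hlam1]; positivity) (by rw [hlam2]; positivity)
    (hρE j).le (hρW j).le (hρE (j - 1)).le (hρW (j + 1)).le (hCFL1 j) (hCFL2 j)

/-- Positivity of the hybrid upwind finite-volume scheme under CFL conditions.
Indices are periodic, `j ∈ ZMod n`; `u j` and `ξ j` are the interface values at `j+1/2`;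
positive and negative parts are written `max · 0` and `min · 0`. -/
theorem positivity_upwind_scheme_CFL
    (n : ℕ) (hn : 1 ≤ n)
    (Δt Δx β : ℝ) (hΔt : 0 < Δt) (hΔx : 0 < Δx) (hβ : 0 < β)
    (lam1 lam2 : ℝ) (hlam1 : lam1 = Δt / Δx) (hlam2 : lam2 = Real.sqrt (Δt / Δx))
    (ρE ρW u ξ : ZMod n → ℝ)
    (hρE : ∀ j, 0 < ρE j) (hρW : ∀ j, 0 < ρW j)
    (ρ' : ZMod n → ℝ)
    (hρ' : ∀ j, ρ' j =
      (ρE j + ρW j) / 2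
      - lam1 * (max (u j) 0 * ρE j + min (u j) 0 * ρW (j + 1)
              - max (u (j - 1)) 0 * ρE (j - 1) - min (u (j - 1)) 0 * ρW j)
      - lam2 * (max (ξ j) 0 * Real.sqrt (ρE j / β)
              + min (ξ j) 0 * Real.sqrt (ρW (j + 1) / β)
              - max (ξ (j - 1)) 0 * Real.sqrt (ρE (j - 1) / β)
              - min (ξ (j - 1)) 0 * Real.sqrt (ρW j / β)))
    (hCFL1 : ∀ j, 0 ≤ 1 / 2 - lam1 * max (u j) 0
        - lam2 * max (ξ j) 0 / Real.sqrt (ρE j * β))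
    (hCFL2 : ∀ j, 0 ≤ 1 / 2 - lam1 * max (-u (j - 1)) 0
        - lam2 * max (-ξ (j - 1)) 0 / Real.sqrt (ρW j * β)) :
    ∀ j, 0 ≤ ρ' j :=
  positivity_upwind_scheme_CFL_general n Δt Δx β hΔt hΔx lam1 lam2 hlam1 hlam2 ρE ρW u ξ hρE hρW ρ'
    hρ' hCFL1 hCFL2
end

section
/- Nonnegativity of the minmod-limited linear reconstruction: let Δx > 0, let 0 ≤ θ ≤ 2, and let a, b, c ≥ 0 be three consecutive nonnegative cell averages (a = ρ̄ⱼ₋₁, b = ρ̄ⱼ, c = ρ̄ⱼ₊₁). Define the limited slope s = minmod(θ(c − b)/Δx, (c − a)/(2Δx), θ(b − a)/Δx). Then the reconstructed east and west point values at the cell interfaces are nonnegative: b + (Δx/2)·s ≥ 0 and b − (Δx/2)·s ≥ 0. -/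
open Classical in
/-- The minmod limiter: the minimum if all arguments are positive, the maximum if all
are negative, and zero otherwise. -/
noncomputable def minmod (z₁ z₂ z₃ : ℝ) : ℝ :=
  if 0 < z₁ ∧ 0 < z₂ ∧ 0 < z₃ then min z₁ (min z₂ z₃)
  else if z₁ < 0 ∧ z₂ < 0 ∧ z₃ < 0 then max z₁ (max z₂ z₃)
  else 0

/-- Nonnegativity of the minmod-limited linear reconstruction: for nonnegative
consecutive cell averages `a = ρ̄ⱼ₋₁`, `b = ρ̄ⱼ`, `c = ρ̄ⱼ₊₁` and `0 ≤ θ ≤ 2`, the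
reconstructed east and west point values `b ± (Δx/2)·s` are nonnegative. -/
theorem minmod_reconstruction_nonneg
    (Δx θ a b c : ℝ) (hΔx : 0 < Δx) (hθ0 : 0 ≤ θ) (hθ2 : θ ≤ 2)
    (ha : 0 ≤ a) (hb : 0 ≤ b) (hc : 0 ≤ c) :
    0 ≤ b + (Δx / 2) * minmod (θ * (c - b) / Δx) ((c - a) / (2 * Δx)) (θ * (b - a) / Δx)
    ∧ 0 ≤ b - (Δx / 2) * minmod (θ * (c - b) / Δx) ((c - a) / (2 * Δx)) (θ * (b - a) / Δx) := by
  unfold minmod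
  split_ifs with h1 h2
  · obtain ⟨p1, p2, p3⟩ := h1
    have hs0 : 0 < min (θ * (c - b) / Δx) (min ((c - a) / (2 * Δx)) (θ * (b - a) / Δx)) :=
      lt_min p1 (lt_min p2 p3)
    have hs : min (θ * (c - b) / Δx) (min ((c - a) / (2 * Δx)) (θ * (b - a) / Δx))
        ≤ θ * (b - a) / Δx := le_trans (min_le_right _ _) (min_le_right _ _)
    have hba : 0 < θ * (b - a) := by
      have := (div_pos_iff.mp p3)
      rcases this with ⟨h, _⟩ | ⟨_, h⟩
      · exact h
      · linarith
    have hba' : 0 < b - a := by nlinarith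
    constructor
    · nlinarith
    · have hkey : Δx / 2 * min (θ * (c - b) / Δx) (min ((c - a) / (2 * Δx)) (θ * (b - a) / Δx))
          ≤ Δx / 2 * (θ * (b - a) / Δx) := by
        apply mul_le_mul_of_nonneg_left hs (by linarith)
      have heq : Δx / 2 * (θ * (b - a) / Δx) = θ * (b - a) / 2 := by
        field_simp
      rw [heq] at hkey
      nlinarith
  · obtain ⟨p1, p2, p3⟩ := h2
    have hs : θ * (c - b) / Δx
        ≤ max (θ * (c - b) / Δx) (max ((c - a) / (2 * Δx)) (θ * (b - a) / Δx)) :=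
      le_max_left _ _
    have hs0 : max (θ * (c - b) / Δx) (max ((c - a) / (2 * Δx)) (θ * (b - a) / Δx)) < 0 :=
      max_lt p1 (max_lt p2 p3)
    have hcb : θ * (c - b) < 0 := by
      have := (div_neg_iff.mp p1)
      rcases this with ⟨h, h'⟩ | ⟨h, h'⟩
      · linarith
      · exact h
    have hcb' : c - b < 0 := by nlinarith
    constructor
    · have hkey : Δx / 2 * (θ * (c - b) / Δx)
          ≤ Δx / 2 * max (θ * (c - b) / Δx) (max ((c - a) / (2 * Δx)) (θ * (b - a) / Δx)) := by
        apply mul_le_mul_of_nonneg_left hs (by linarith)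
      have heq : Δx / 2 * (θ * (c - b) / Δx) = θ * (c - b) / 2 := by
        field_simp
      rw [heq] at hkey
      nlinarith
    · nlinarith
  · simp [hb]
end

section
/- Planar integral of the 12-6 Lennard-Jones potential: let ε > 0 and let x ∈ ℝ with |x| ≥ 1. Then the integral over the plane of the 12-6 Lennard-Jones potential evaluated at distance r = √(x² + y² + z²), namely ∫_{ℝ²} 4ε·((x² + y² + z²)⁻⁶ − (x² + y² + z²)⁻³) dy dz, equals π·ε·(0.8·|x|⁻¹⁰ − 2·|x|⁻⁴). -/
/-! In polar coordinates the integrand depends only on the radius, so the planar integral is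
`2π ∫₀^∞ r u(x² + r²) dr`, with `u` the potential as a function of the squared distance.
Each power term `r (x² + r²)^{-(m+1)}` has the elementary antiderivative
`-(x² + r²)^{-m} / (2m)`, which vanishes at infinity. -/

open MeasureTheory Set Real Filter

theorem integral_comp_sq_add_sq {E : Type*} [NormedAddCommGroup E] [NormedSpace ℝ E]
    (g : ℝ → E) :
    ∫ p : ℝ × ℝ, g (p.1 ^ 2 + p.2 ^ 2) = (2 * π) • ∫ r in Ioi 0, r • g (r ^ 2) := by
  rw [← integral_comp_polarCoord_symm]
  have hradial (p : ℝ × ℝ) : p.1 • g ((polarCoord.symm p).1 ^ 2 + (polarCoord.symm p).2 ^ 2)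
      = p.1 • g (p.1 ^ 2) := by
    simp only [polarCoord_symm_apply, mul_pow, ← mul_add, cos_sq_add_sin_sq, mul_one]
  simp_rw [hradial]
  rw [polarCoord_target, Measure.volume_eq_prod, ← Measure.prod_restrict,
    integral_fun_fst (fun r => r • g (r ^ 2)),
    measureReal_restrict_apply_univ, Real.volume_real_Ioo_of_le (by linarith [pi_pos]),
    sub_neg_eq_add, ← two_mul]

section PowerLaw

variable {a : ℝ} {m : ℕ}

theorem hasDerivAt_neg_inv_add_sq_pow_div (hm : m ≠ 0) {r : ℝ} (hr : a + r ^ 2 ≠ 0) :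
    HasDerivAt (fun r : ℝ => -((a + r ^ 2) ^ m)⁻¹ / (2 * m))
      (r * ((a + r ^ 2) ^ (m + 1))⁻¹) r := by
  have hinner : HasDerivAt (fun r : ℝ => a + r ^ 2) (2 * r ^ 1) r :=
    (hasDerivAt_pow 2 r).const_add a
  refine ((((hinner.pow m).inv (pow_ne_zero m hr)).neg).div_const (2 * m)).congr_deriv ?_
  obtain ⟨k, rfl⟩ := Nat.exists_eq_add_one_of_ne_zero hm
  simp only [Pi.pow_apply, Nat.add_sub_cancel, Nat.cast_add_one]
  field_simp
  ring

theorem tendsto_neg_inv_add_sq_pow_div (hm : m ≠ 0) :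
    Tendsto (fun r : ℝ => -((a + r ^ 2) ^ m)⁻¹ / (2 * m)) atTop (nhds 0) := by
  have hbase : Tendsto (fun r : ℝ => a + r ^ 2) atTop atTop :=
    tendsto_atTop_add_const_left _ a (tendsto_pow_atTop two_ne_zero)
  simpa using (((tendsto_pow_atTop hm).comp hbase).inv_tendsto_atTop.neg).div_const (2 * (m : ℝ))

theorem mul_inv_add_sq_pow_nonneg (ha : 0 < a) {r : ℝ} (hr : r ∈ Ioi 0) :
    0 ≤ r * ((a + r ^ 2) ^ (m + 1))⁻¹ := by
  have : 0 < r := hr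
  positivity

theorem integrableOn_Ioi_mul_inv_add_sq_pow (ha : 0 < a) (hm : m ≠ 0) :
    IntegrableOn (fun r : ℝ => r * ((a + r ^ 2) ^ (m + 1))⁻¹) (Ioi 0) :=
  integrableOn_Ioi_deriv_of_nonneg'
    (fun _ _ => hasDerivAt_neg_inv_add_sq_pow_div hm (by positivity))
    (fun _ => mul_inv_add_sq_pow_nonneg ha) (tendsto_neg_inv_add_sq_pow_div hm)

theorem integral_Ioi_mul_inv_add_sq_pow (ha : 0 < a) (hm : m ≠ 0) :
    ∫ r in Ioi 0, r * ((a + r ^ 2) ^ (m + 1))⁻¹ = (a ^ m)⁻¹ / (2 * m) := by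
  rw [integral_Ioi_of_hasDerivAt_of_nonneg'
    (fun _ _ => hasDerivAt_neg_inv_add_sq_pow_div hm (by positivity))
    (fun _ => mul_inv_add_sq_pow_nonneg ha) (tendsto_neg_inv_add_sq_pow_div hm)]
  simp only [ne_eq, OfNat.ofNat_ne_zero, not_false_eq_true, zero_pow, add_zero, zero_sub, neg_div,
    neg_neg]

end PowerLaw

theorem lennard_jones_planar_integral_general
    (ε x : ℝ) (hx : 1 ≤ |x|) :
    (∫ p : ℝ × ℝ,
        4 * ε * (((x ^ 2 + p.1 ^ 2 + p.2 ^ 2) ^ 6)⁻¹ - ((x ^ 2 + p.1 ^ 2 + p.2 ^ 2) ^ 3)⁻¹))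
      = Real.pi * ε * (0.8 * (|x| ^ 10)⁻¹ - 2 * (|x| ^ 4)⁻¹) := by
  have ha : 0 < x ^ 2 := by nlinarith [sq_abs x]
  simp_rw [add_assoc (x ^ 2)]
  rw [integral_comp_sq_add_sq (fun s => 4 * ε * (((x ^ 2 + s) ^ 6)⁻¹ - ((x ^ 2 + s) ^ 3)⁻¹))]
  have hsplit : ∫ r in Ioi 0, r • (4 * ε * (((x ^ 2 + r ^ 2) ^ 6)⁻¹ - ((x ^ 2 + r ^ 2) ^ 3)⁻¹))
      = 4 * ε * ((∫ r in Ioi 0, r * ((x ^ 2 + r ^ 2) ^ (5 + 1))⁻¹)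
        - ∫ r in Ioi 0, r * ((x ^ 2 + r ^ 2) ^ (2 + 1))⁻¹) := by
    rw [← integral_sub (integrableOn_Ioi_mul_inv_add_sq_pow ha (by norm_num))
      (integrableOn_Ioi_mul_inv_add_sq_pow ha (by norm_num)), ← integral_const_mul]
    congr 1 with r
    simp only [smul_eq_mul]
    ring
  rw [hsplit, integral_Ioi_mul_inv_add_sq_pow ha (by norm_num),
    integral_Ioi_mul_inv_add_sq_pow ha (by norm_num), ← sq_abs x, smul_eq_mul]
  push_cast
  ring

/-- Planar integral of the 12-6 Lennard-Jones potential: for `|x| ≥ 1`,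
`∫_{ℝ²} 4ε·((x²+y²+z²)⁻⁶ − (x²+y²+z²)⁻³) dy dz = π·ε·(0.8·|x|⁻¹⁰ − 2·|x|⁻⁴)`. -/
theorem lennard_jones_planar_integral
    (ε x : ℝ) (hε : 0 < ε) (hx : 1 ≤ |x|) :
    (∫ p : ℝ × ℝ,
        4 * ε * (((x ^ 2 + p.1 ^ 2 + p.2 ^ 2) ^ 6)⁻¹ - ((x ^ 2 + p.1 ^ 2 + p.2 ^ 2) ^ 3)⁻¹))
      = Real.pi * ε * (0.8 * (|x| ^ 10)⁻¹ - 2 * (|x| ^ 4)⁻¹) :=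
  lennard_jones_planar_integral_general ε x hx
end

section
/- Free-energy decay along classical solutions of the deterministic gradient flow: let L > 0, let f : ℝ → ℝ be twice continuously differentiable, let V : ℝ → ℝ be continuously differentiable and L-periodic, let W : ℝ → ℝ be continuous, even and L-periodic, and let ρ : ℝ × ℝ → ℝ be twice continuously differentiable, L-periodic in the spatial variable x, with ρ(t, x) > 0 for all t, x, satisfying the deterministic equation ∂ₜρ = ∂ₓ(ρ ∂ₓ ξ) with ξ(t, x) = f'(ρ(t, x)) + V(x) + ∫₀ᴸ W(x − y) ρ(t, y) dy. Then for every t, the free energy E(t) = ∫₀ᴸ [f(ρ(t, x)) + V(x) ρ(t, x) + (1/2)(∫₀ᴸ W(x − y) ρ(t, y) dy) ρ(t, x)] dx is differentiable in t and satisfies dE/dt = −∫₀ᴸ ρ(t, x)·(∂ₓξ(t, x))² dx; in particular E is nonincreasing in time. -/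
open MeasureTheory intervalIntegral

/-! Differentiating under the integral sign, the rate of change of `E` is the first variation
`∫ ξ ∂ₜρ`; the interaction term contributes `(W ⊛ ρ) ∂ₜρ` with the full weight, not half of it,
because an even kernel makes `∫ (W ⊛ g) h` symmetric in `g` and `h`. Inserting the equation
`∂ₜρ = ∂ₓ(ρ ∂ₓξ)` and integrating by parts over one period, where both `ξ` and `ρ ∂ₓξ` are
periodic so the boundary terms cancel, gives `-∫ ρ (∂ₓξ)² ≤ 0`. -/

lemma hasDerivAt_intervalIntegral_of_continuous (a b : ℝ) {φ ψ : ℝ → ℝ → ℝ}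
    (hφ : Continuous fun p : ℝ × ℝ => φ p.1 p.2)
    (hψ : Continuous fun p : ℝ × ℝ => ψ p.1 p.2)
    (hd : ∀ t x, HasDerivAt (fun s => φ s x) (ψ t x) t) (t₀ : ℝ) :
    HasDerivAt (fun s => ∫ x in a..b, φ s x) (∫ x in a..b, ψ t₀ x) t₀ := by
  obtain ⟨C, hC⟩ := ((isCompact_closedBall t₀ 1).prod isCompact_uIcc).exists_bound_of_continuousOn
    hψ.continuousOn
  refine (hasDerivAt_integral_of_dominated_loc_of_deriv_le (bound := fun _ => C)
    (Metric.closedBall_mem_nhds t₀ one_pos) ?_ ?_ ?_ ?_ intervalIntegrable_const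
    (.of_forall fun x _ s _ => hd s x)).2
  · exact .of_forall fun s => (hφ.comp (Continuous.prodMk_right s)).aestronglyMeasurable
  · exact (hφ.comp (Continuous.prodMk_right t₀)).intervalIntegrable a b
  · exact (hψ.comp (Continuous.prodMk_right t₀)).aestronglyMeasurable
  · exact .of_forall fun x hx s hs => hC (s, x) ⟨hs, Set.uIoc_subset_uIcc hx⟩

lemma continuous_of_hasDerivAt_fst {φ ψ : ℝ → ℝ → ℝ}
    (hφ : ContDiff ℝ 1 fun p : ℝ × ℝ => φ p.1 p.2)
    (hψ : ∀ t x, HasDerivAt (fun s => φ s x) (ψ t x) t) :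
    Continuous fun p : ℝ × ℝ => ψ p.1 p.2 := by
  refine ((hφ.continuous_fderiv one_ne_zero).clm_apply
    (continuous_const (y := ((1 : ℝ), (0 : ℝ))))).congr fun ⟨t, x⟩ => ?_
  have hline : HasDerivAt (fun s : ℝ => (s, x)) ((1 : ℝ), (0 : ℝ)) t :=
    (hasDerivAt_id t).prodMk (hasDerivAt_const t x)
  have h := (hφ.differentiable one_ne_zero (t, x)).hasFDerivAt.comp_hasDerivAt t hline
  exact ((hψ t x).unique h).symm

lemma Function.Periodic.of_hasDerivAt {E : Type*} [NormedAddCommGroup E] [NormedSpace ℝ E]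
    {u u' : ℝ → E} {L : ℝ} (hu : Function.Periodic u L) (hd : ∀ x, HasDerivAt u (u' x) x) :
    Function.Periodic u' L := fun x => by
  have hshift := (hd (x + L)).comp_add_const x L
  rw [show (fun y => u (y + L)) = u from funext hu] at hshift
  exact hshift.unique (hd x)

lemma integral_mul_deriv_eq_neg_of_periodic {u u' v v' : ℝ → ℝ} {L : ℝ}
    (hu : Function.Periodic u L) (hv : Function.Periodic v L)
    (hu' : ∀ x, HasDerivAt u (u' x) x) (hv' : ∀ x, HasDerivAt v (v' x) x)
    (hu'i : IntervalIntegrable u' volume 0 L) (hv'i : IntervalIntegrable v' volume 0 L) :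
    ∫ x in (0:ℝ)..L, u x * v' x = -∫ x in (0:ℝ)..L, u' x * v x := by
  rw [integral_mul_deriv_eq_deriv_mul (fun x _ => hu' x) (fun x _ => hv' x) hu'i hv'i]
  have hu0 : u L = u 0 := by simpa using hu 0
  have hv0 : v L = v 0 := by simpa using hv 0
  rw [hu0, hv0]
  ring

lemma integral_mul_deriv_mul_deriv_eq_neg_of_periodic {u u' r J' : ℝ → ℝ} {L : ℝ}
    (hr : Continuous r) (hrpos : ∀ x, 0 < r x) (hrper : Function.Periodic r L)
    (hu : Function.Periodic u L) (hu' : ∀ x, HasDerivAt u (u' x) x)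
    (hJ' : ∀ x, HasDerivAt (fun y => r y * u' y) (J' x) x)
    (hJ'i : IntervalIntegrable J' volume 0 L) :
    ∫ x in (0:ℝ)..L, u x * J' x = -∫ x in (0:ℝ)..L, r x * u' x ^ 2 := by
  have hu'c : Continuous u' := by
    have hJ : Continuous fun x => r x * u' x :=
      continuous_iff_continuousAt.2 fun x => (hJ' x).continuousAt
    exact (hJ.div hr fun x => (hrpos x).ne').congr fun x => mul_div_cancel_left₀ _ (hrpos x).ne'
  rw [integral_mul_deriv_eq_neg_of_periodic hu (hrper.mul (hu.of_hasDerivAt hu')) hu' hJ'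
    (hu'c.intervalIntegrable 0 L) hJ'i]
  congr 1
  exact integral_congr fun x _ => by simp only [Pi.mul_apply]; ring

/-- The periodic convolution `W ⊛ g`. -/
noncomputable def periodicConv (L : ℝ) (W g : ℝ → ℝ) (x : ℝ) : ℝ := ∫ y in (0:ℝ)..L, W (x - y) * g y

section periodicConv

variable {L : ℝ} {W : ℝ → ℝ}

lemma Function.Periodic.periodicConv (hW : Function.Periodic W L) (g : ℝ → ℝ) :
    Function.Periodic (periodicConv L W g) L := fun x => by
  unfold _root_.periodicConv
  simp only [add_sub_right_comm, hW (x - _)]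

lemma continuous_periodicConv (hW : Continuous W) {g : ℝ → ℝ → ℝ}
    (hg : Continuous fun p : ℝ × ℝ => g p.1 p.2) :
    Continuous fun p : ℝ × ℝ => periodicConv L W (g p.1) p.2 :=
  continuous_parametric_intervalIntegral_of_continuous' (by fun_prop) 0 L

lemma hasDerivAt_periodicConv (hW : Continuous W) {g g' : ℝ → ℝ → ℝ}
    (hg : Continuous fun p : ℝ × ℝ => g p.1 p.2) (hg' : Continuous fun p : ℝ × ℝ => g' p.1 p.2)
    (hd : ∀ t x, HasDerivAt (fun s => g s x) (g' t x) t) (t x : ℝ) :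
    HasDerivAt (fun s => periodicConv L W (g s) x) (periodicConv L W (g' t) x) t :=
  hasDerivAt_intervalIntegral_of_continuous 0 L (by fun_prop) (by fun_prop)
    (fun s y => (hd s y).const_mul (W (x - y))) t

lemma integral_periodicConv_mul_comm (hW : Continuous W) (hWeven : ∀ x, W (-x) = W x)
    {g h : ℝ → ℝ} (hg : Continuous g) (hh : Continuous h) :
    ∫ x in (0:ℝ)..L, periodicConv L W g x * h x = ∫ x in (0:ℝ)..L, periodicConv L W h x * g x := by
  have hW' : ∀ x y, W (x - y) = W (y - x) := fun x y => by rw [← hWeven, neg_sub]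
  calc ∫ x in (0:ℝ)..L, periodicConv L W g x * h x
      = ∫ x in (0:ℝ)..L, ∫ y in (0:ℝ)..L, W (x - y) * g y * h x := by
        simp only [periodicConv, ← intervalIntegral.integral_mul_const]
    _ = ∫ y in (0:ℝ)..L, ∫ x in (0:ℝ)..L, W (x - y) * g y * h x :=
        intervalIntegral_intervalIntegral_swap <|
          (ContinuousOn.integrableOn_compact (isCompact_uIcc.prod isCompact_uIcc)
            (by fun_prop)).mono_set (Set.prod_mono Set.uIoc_subset_uIcc Set.uIoc_subset_uIcc)
    _ = ∫ y in (0:ℝ)..L, periodicConv L W h y * g y := by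
        refine integral_congr fun y _ => ?_
        simp only [periodicConv, ← intervalIntegral.integral_mul_const]
        refine integral_congr fun x _ => ?_
        simp only [hW' x y]
        ring

end periodicConv

section energy

variable {L : ℝ} {g g' : ℝ → ℝ → ℝ}

lemma hasDerivAt_integral_localEnergy {f V : ℝ → ℝ} (hf : ContDiff ℝ 1 f) (hV : Continuous V)
    (hg : Continuous fun p : ℝ × ℝ => g p.1 p.2) (hg' : Continuous fun p : ℝ × ℝ => g' p.1 p.2)
    (hd : ∀ t x, HasDerivAt (fun s => g s x) (g' t x) t) (t : ℝ) :
    HasDerivAt (fun s => ∫ x in (0:ℝ)..L, (f (g s x) + V x * g s x))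
      (∫ x in (0:ℝ)..L, (deriv f (g t x) + V x) * g' t x) t := by
  have hf' := hf.continuous_deriv le_rfl
  have hfd := hf.differentiable one_ne_zero
  refine hasDerivAt_intervalIntegral_of_continuous 0 L
    (φ := fun s x => f (g s x) + V x * g s x) (ψ := fun s x => (deriv f (g s x) + V x) * g' s x)
    (by fun_prop) (by fun_prop) (fun s x => ?_) t
  rw [add_mul]
  exact ((hfd _).hasDerivAt.comp s (hd s x)).add ((hd s x).const_mul (V x))

lemma hasDerivAt_integral_interactionEnergy {W : ℝ → ℝ} (hW : Continuous W)
    (hWeven : ∀ x, W (-x) = W x)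
    (hg : Continuous fun p : ℝ × ℝ => g p.1 p.2) (hg' : Continuous fun p : ℝ × ℝ => g' p.1 p.2)
    (hd : ∀ t x, HasDerivAt (fun s => g s x) (g' t x) t) (t : ℝ) :
    HasDerivAt (fun s => ∫ x in (0:ℝ)..L, (1 / 2) * periodicConv L W (g s) x * g s x)
      (∫ x in (0:ℝ)..L, periodicConv L W (g t) x * g' t x) t := by
  have hK := continuous_periodicConv (L := L) hW hg
  have hG := continuous_periodicConv (L := L) hW hg'
  have hKt : Continuous (periodicConv L W (g t)) := hK.comp (Continuous.prodMk_right t)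
  have hGt : Continuous (periodicConv L W (g' t)) := hG.comp (Continuous.prodMk_right t)
  have hgt : Continuous (g t) := hg.comp (Continuous.prodMk_right t)
  have hg't : Continuous (g' t) := hg'.comp (Continuous.prodMk_right t)
  convert hasDerivAt_intervalIntegral_of_continuous 0 L
    (φ := fun s x => (1 / 2) * periodicConv L W (g s) x * g s x)
    (ψ := fun s x => (1 / 2) * periodicConv L W (g' s) x * g s x
      + (1 / 2) * periodicConv L W (g s) x * g' s x) (by fun_prop) (by fun_prop)
    (fun s x => ((hasDerivAt_periodicConv hW hg hg' hd s x).const_mul (1 / 2)).mul (hd s x)) t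
    using 1
  rw [intervalIntegral.integral_add ((by fun_prop : Continuous _).intervalIntegrable _ _)
    ((by fun_prop : Continuous _).intervalIntegrable _ _)]
  simp only [mul_assoc, intervalIntegral.integral_const_mul]
  rw [integral_periodicConv_mul_comm hW hWeven hg't hgt]
  ring

lemma hasDerivAt_integral_freeEnergy {f V W : ℝ → ℝ} (hf : ContDiff ℝ 1 f) (hV : Continuous V)
    (hW : Continuous W) (hWeven : ∀ x, W (-x) = W x)
    (hg : Continuous fun p : ℝ × ℝ => g p.1 p.2) (hg' : Continuous fun p : ℝ × ℝ => g' p.1 p.2)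
    (hd : ∀ t x, HasDerivAt (fun s => g s x) (g' t x) t) (t : ℝ) :
    HasDerivAt (fun s => ∫ x in (0:ℝ)..L,
        (f (g s x) + V x * g s x + (1 / 2) * periodicConv L W (g s) x * g s x))
      (∫ x in (0:ℝ)..L, (deriv f (g t x) + V x + periodicConv L W (g t) x) * g' t x) t := by
  have hf' := hf.continuous_deriv le_rfl
  have hK := continuous_periodicConv (L := L) hW hg
  have hKs : ∀ s, Continuous (periodicConv L W (g s)) := fun s =>
    hK.comp (Continuous.prodMk_right s)
  have hgs : ∀ s, Continuous (g s) := fun s => hg.comp (Continuous.prodMk_right s)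
  have hg's : ∀ s, Continuous (g' s) := fun s => hg'.comp (Continuous.prodMk_right s)
  have hsplit : ∀ s, (∫ x in (0:ℝ)..L,
      (f (g s x) + V x * g s x + (1 / 2) * periodicConv L W (g s) x * g s x))
      = (∫ x in (0:ℝ)..L, (f (g s x) + V x * g s x))
        + ∫ x in (0:ℝ)..L, (1 / 2) * periodicConv L W (g s) x * g s x := fun s => by
    have := hgs s
    have := hKs s
    exact intervalIntegral.integral_add ((by fun_prop : Continuous _).intervalIntegrable _ _)
      ((by fun_prop : Continuous _).intervalIntegrable _ _)
  have hvariation : (∫ x in (0:ℝ)..L, (deriv f (g t x) + V x + periodicConv L W (g t) x) * g' t x)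
      = (∫ x in (0:ℝ)..L, (deriv f (g t x) + V x) * g' t x)
        + ∫ x in (0:ℝ)..L, periodicConv L W (g t) x * g' t x := by
    have := hgs t
    have := hg's t
    have := hKs t
    simp only [add_mul]
    exact intervalIntegral.integral_add ((by fun_prop : Continuous _).intervalIntegrable _ _)
      ((by fun_prop : Continuous _).intervalIntegrable _ _)
  rw [funext hsplit, hvariation]
  exact (hasDerivAt_integral_localEnergy hf hV hg hg' hd t).add
    (hasDerivAt_integral_interactionEnergy hW hWeven hg hg' hd t)

end energy

/-- Free-energy decay along classical solutions of the deterministic gradient flow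
`∂ₜρ = ∂ₓ(ρ ∂ₓξ)` with `ξ = f'(ρ) + V + W ⊛ ρ` on the `L`-periodic domain:
the free energy `E(t) = ∫₀ᴸ f(ρ) + Vρ + (1/2)(W ⊛ ρ) ρ dx` satisfies
`dE/dt = −∫₀ᴸ ρ (∂ₓξ)² dx`, and in particular `E` is nonincreasing. Here `ξx` is the
spatial derivative of `ξ` and `F` the spatial derivative of `ρ·ξx`. -/
theorem free_energy_decay_gradient_flow
    (L : ℝ) (hL : 0 < L)
    (f V W : ℝ → ℝ)
    (hf : ContDiff ℝ 2 f)
    (hV : ContDiff ℝ 1 V) (hVper : Function.Periodic V L)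
    (hW : Continuous W) (hWeven : ∀ x, W (-x) = W x) (hWper : Function.Periodic W L)
    (ρ : ℝ → ℝ → ℝ)
    (hρ : ContDiff ℝ 2 (fun p : ℝ × ℝ => ρ p.1 p.2))
    (hρper : ∀ t x, ρ t (x + L) = ρ t x)
    (hρpos : ∀ t x, 0 < ρ t x)
    (ξ : ℝ → ℝ → ℝ)
    (hξ : ∀ t x, ξ t x = deriv f (ρ t x) + V x + ∫ y in (0:ℝ)..L, W (x - y) * ρ t y)
    (ξx : ℝ → ℝ → ℝ)
    (hξx : ∀ t x, HasDerivAt (fun x' => ξ t x') (ξx t x) x)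
    (F : ℝ → ℝ → ℝ)
    (hF : ∀ t x, HasDerivAt (fun x' => ρ t x' * ξx t x') (F t x) x)
    (hpde : ∀ t x, HasDerivAt (fun s => ρ s x) (F t x) t)
    (E : ℝ → ℝ)
    (hE : ∀ t, E t = ∫ x in (0:ℝ)..L,
        (f (ρ t x) + V x * ρ t x
          + (1 / 2) * (∫ y in (0:ℝ)..L, W (x - y) * ρ t y) * ρ t x)) :
    (∀ t, HasDerivAt E (-(∫ x in (0:ℝ)..L, ρ t x * (ξx t x) ^ 2)) t)
    ∧ ∀ s t : ℝ, s ≤ t → E t ≤ E s := by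
  have hρc : Continuous fun p : ℝ × ℝ => ρ p.1 p.2 := hρ.continuous
  have hFc := continuous_of_hasDerivAt_fst (hρ.of_le one_le_two) hpde
  have hξper (t : ℝ) : Function.Periodic (ξ t) L := fun x => by
    simp only [hξ, hρper, hVper x]
    exact congrArg _ (hWper.periodicConv (ρ t) x)
  have hdissipation (t : ℝ) : HasDerivAt E (-(∫ x in (0:ℝ)..L, ρ t x * (ξx t x) ^ 2)) t := by
    rw [show E = _ from funext hE]
    refine (hasDerivAt_integral_freeEnergy (hf.of_le one_le_two) hV.continuous hW hWeven
      hρc hFc hpde t).congr_deriv ?_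
    calc ∫ x in (0:ℝ)..L, (deriv f (ρ t x) + V x + periodicConv L W (ρ t) x) * F t x
        = ∫ x in (0:ℝ)..L, ξ t x * F t x := integral_congr fun x _ => by rw [hξ]; rfl
      _ = -∫ x in (0:ℝ)..L, ρ t x * ξx t x ^ 2 :=
          integral_mul_deriv_mul_deriv_eq_neg_of_periodic (hρc.comp (Continuous.prodMk_right t))
            (hρpos t) (hρper t) (hξper t) (hξx t) (hF t)
            ((hFc.comp (Continuous.prodMk_right t)).intervalIntegrable 0 L)
  exact ⟨hdissipation, fun s t hst => antitone_of_hasDerivAt_nonpos hdissipation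
    (fun t => neg_nonpos.2 (integral_nonneg hL.le fun x _ => by have := hρpos t x; positivity)) hst⟩
end
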